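/- arXiv:1907.02133 — 2 statements merged into one kernel-verified Lean document; each statement's English description precedes it below -/
import Mathlib

section
/- For the synchronized product of two (parametric) timed automata over a synchronization set Σₛ containing all shared actions, a finite timed word using only synchronized actions is in the language of the product only if its projection (the same timed word restricted to the actions of each component) is accepted by each component. -/
open NNReal

/-- Time-shift of a clock valuation. -/
def shift {C : Type} (v : C → ℝ≥0) (d : ℝ≥0) : C → ℝ≥0 := fun x => v x + d

/-- Reset of a clock valuation. -/
noncomputable def resetv {C : Type} (v : C → ℝ≥0) (R : Set C) : C → ℝ≥0 :=
  fun x => open Classical in if x ∈ R then 0 else v x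

/-- A (parametric-free) timed automaton over actions `A`, locations `L`, clocks `C`:
an initial location, invariants, and edges `(ℓ, g, a, R, ℓ')` where the guard `g`
is a predicate on clock valuations and `R` is the set of clocks to reset. -/
structure TA (A L C : Type) where
  init : L
  inv : L → (C → ℝ≥0) → Prop
  trans : L → ((C → ℝ≥0) → Prop) → A → Set C → L → Prop

/-- `T.Run l v t w lf vf tf`: starting from state `(l, v)` at absolute time `t`,
there is a finite run with associated timed word `w` (actions paired with the
absolute times at which they occur) ending in state `(lf, vf)` at time `tf`.
Each step delays by some `d` (keeping the invariant along the way), takes an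
edge whose guard is satisfied, resets its clocks, and satisfies the target
invariant. -/
inductive TA.Run {A L C : Type} (T : TA A L C) :
    L → (C → ℝ≥0) → ℝ≥0 → List (A × ℝ≥0) → L → (C → ℝ≥0) → ℝ≥0 → Prop
  | nil (l : L) (v : C → ℝ≥0) (t : ℝ≥0) : TA.Run T l v t [] l v t
  | cons {l : L} {v : C → ℝ≥0} {t : ℝ≥0} {l' lf : L} {vf : C → ℝ≥0} {tf : ℝ≥0}
      {rest : List (A × ℝ≥0)}
      (d : ℝ≥0) (g : (C → ℝ≥0) → Prop) (R : Set C) (a : A) :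
      T.trans l g a R l' →
      (∀ d' ≤ d, T.inv l (shift v d')) →
      g (shift v d) →
      T.inv l' (resetv (shift v d) R) →
      TA.Run T l' (resetv (shift v d) R) (t + d) rest lf vf tf →
      TA.Run T l v t ((a, t + d) :: rest) lf vf tf

/-- Synchronized product of two TAs over a common alphabet `A` (full
synchronization: every action is synchronized, so both components move
simultaneously, with conjoined invariants and guards and united reset sets). -/
def TA.prod {A L₁ L₂ C₁ C₂ : Type} (T₁ : TA A L₁ C₁) (T₂ : TA A L₂ C₂) :
    TA A (L₁ × L₂) (C₁ ⊕ C₂) where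
  init := (T₁.init, T₂.init)
  inv := fun l v => T₁.inv l.1 (fun c => v (Sum.inl c)) ∧ T₂.inv l.2 (fun c => v (Sum.inr c))
  trans := fun l g a R l' =>
    ∃ g₁ R₁ g₂ R₂, T₁.trans l.1 g₁ a R₁ l'.1 ∧ T₂.trans l.2 g₂ a R₂ l'.2 ∧
      (∀ v, g v ↔ g₁ (fun c => v (Sum.inl c)) ∧ g₂ (fun c => v (Sum.inr c))) ∧
      R = Sum.inl '' R₁ ∪ Sum.inr '' R₂

lemma resetv_proj_l {C₁ C₂ : Type} (v : C₁ ⊕ C₂ → ℝ≥0) (R₁ : Set C₁) (R₂ : Set C₂) :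
    (fun c => resetv v (Sum.inl '' R₁ ∪ Sum.inr '' R₂) (Sum.inl c)) =
      resetv (fun c => v (Sum.inl c)) R₁ := by
  funext c
  simp only [resetv, Set.mem_union, Set.mem_image]
  by_cases hc : c ∈ R₁ <;> simp [hc]

lemma resetv_proj_r {C₁ C₂ : Type} (v : C₁ ⊕ C₂ → ℝ≥0) (R₁ : Set C₁) (R₂ : Set C₂) :
    (fun c => resetv v (Sum.inl '' R₁ ∪ Sum.inr '' R₂) (Sum.inr c)) =
      resetv (fun c => v (Sum.inr c)) R₂ := by
  funext c
  simp only [resetv, Set.mem_union, Set.mem_image]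
  by_cases hc : c ∈ R₂ <;> simp [hc]

lemma shift_proj_l {C₁ C₂ : Type} (v : C₁ ⊕ C₂ → ℝ≥0) (d : ℝ≥0) :
    (fun c => shift v d (Sum.inl c)) = shift (fun c => v (Sum.inl c)) d := rfl

lemma shift_proj_r {C₁ C₂ : Type} (v : C₁ ⊕ C₂ → ℝ≥0) (d : ℝ≥0) :
    (fun c => shift v d (Sum.inr c)) = shift (fun c => v (Sum.inr c)) d := rfl

lemma prod_run_projects_aux {A L₁ L₂ C₁ C₂ : Type}
    (T₁ : TA A L₁ C₁) (T₂ : TA A L₂ C₂) {l : L₁ × L₂} {v : C₁ ⊕ C₂ → ℝ≥0} {t : ℝ≥0}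
    {w : List (A × ℝ≥0)} {lf : L₁ × L₂} {vf : C₁ ⊕ C₂ → ℝ≥0} {tf : ℝ≥0}
    (h : (T₁.prod T₂).Run l v t w lf vf tf) :
    (∃ vf₁, T₁.Run l.1 (fun c => v (Sum.inl c)) t w lf.1 vf₁ tf) ∧
    (∃ vf₂, T₂.Run l.2 (fun c => v (Sum.inr c)) t w lf.2 vf₂ tf) := by
  induction h with
  | nil l v t => exact ⟨⟨_, TA.Run.nil _ _ _⟩, ⟨_, TA.Run.nil _ _ _⟩⟩
  | @cons l v t l' lfi vfi tfi rest d g R a htr hinv hg hinv' _ ih =>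
    obtain ⟨g₁, R₁, g₂, R₂, h₁, h₂, hgiff, hR⟩ := htr
    subst hR
    rw [resetv_proj_l, resetv_proj_r, shift_proj_l, shift_proj_r] at ih
    obtain ⟨⟨vf₁, r₁⟩, ⟨vf₂, r₂⟩⟩ := ih
    refine ⟨⟨vf₁, TA.Run.cons d g₁ R₁ a h₁ (fun d' hd' => (hinv d' hd').1)
        ((hgiff _).1 hg).1 ?_ r₁⟩, ⟨vf₂, TA.Run.cons d g₂ R₂ a h₂ (fun d' hd' => (hinv d' hd').2)
        ((hgiff _).1 hg).2 ?_ r₂⟩⟩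
    · have := hinv'.1
      rwa [show (fun c => resetv (shift v d) _ (Sum.inl c)) =
        resetv (shift (fun c => v (Sum.inl c)) d) R₁ from resetv_proj_l _ _ _] at this
    · have := hinv'.2
      rwa [show (fun c => resetv (shift v d) _ (Sum.inr c)) =
        resetv (shift (fun c => v (Sum.inr c)) d) R₂ from resetv_proj_r _ _ _] at this

/-- A finite timed word (using only synchronized actions) accepted by the
synchronized product is accepted by each component: a finite run of the product
from its initial state on word `w` projects to finite runs of each component on
the same word `w`. -/
theorem product_run_projects {A L₁ L₂ C₁ C₂ : Type}
    (T₁ : TA A L₁ C₁) (T₂ : TA A L₂ C₂) (w : List (A × ℝ≥0))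
    (lf : L₁ × L₂) (vf : C₁ ⊕ C₂ → ℝ≥0) (tf : ℝ≥0)
    (h : (T₁.prod T₂).Run (T₁.prod T₂).init (fun _ => 0) 0 w lf vf tf) :
    (∃ vf₁ tf₁, T₁.Run T₁.init (fun _ => 0) 0 w lf.1 vf₁ tf₁) ∧
    (∃ vf₂ tf₂, T₂.Run T₂.init (fun _ => 0) 0 w lf.2 vf₂ tf₂) := by
  obtain ⟨⟨vf₁, r₁⟩, ⟨vf₂, r₂⟩⟩ := prod_run_projects_aux T₁ T₂ h
  exact ⟨⟨vf₁, tf, r₁⟩, ⟨vf₂, tf, r₂⟩⟩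
end

section
/- A finite timed word w belongs to the set of timed words of a timed automaton A if and only if the final location of TransWord(w) is reachable in the synchronized product TransWord(w) ∥_Σ A (synchronizing on the whole alphabet Σ, with no silent transitions). -/
open NNReal

/-- `TransWord`: translation of a finite timed word `w = (a₁,d₁)⋯(aₙ,dₙ)` into a
linear TA with `n+1` locations `ℓ₀, …, ℓₙ` (the type `Fin (n+1)`), a single clock
`x_abs` (type `Unit`) never reset measuring absolute time, and transitions
`ℓᵢ₋₁ → ℓᵢ` labeled `aᵢ` and guarded by `x_abs = dᵢ`. -/
def transWord {A : Type} (w : List (A × ℝ≥0)) : TA A (Fin (w.length + 1)) Unit where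
  init := 0
  inv := fun _ _ => True
  trans := fun l g a R l' =>
    ∃ i : Fin w.length, l = i.castSucc ∧ l' = i.succ ∧ a = (w.get i).1 ∧ R = (∅ : Set Unit) ∧
      ∀ v : Unit → ℝ≥0, g v ↔ v () = (w.get i).2

lemma resetv_prod_inr {C : Type} (u : Unit ⊕ C → ℝ≥0) (d : ℝ≥0) (RT : Set C) :
    (fun c => resetv (shift u d) (Sum.inl '' (∅ : Set Unit) ∪ Sum.inr '' RT) (Sum.inr c)) =
      resetv (shift (fun c => u (Sum.inr c)) d) RT := by
  funext c
  by_cases h : c ∈ RT <;> simp [resetv, shift, h]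

lemma resetv_prod_inl {C : Type} (u : Unit ⊕ C → ℝ≥0) (d : ℝ≥0) (RT : Set C) :
    resetv (shift u d) (Sum.inl '' (∅ : Set Unit) ∪ Sum.inr '' RT) (Sum.inl ()) =
      u (Sum.inl ()) + d := by
  simp [resetv, shift]

/-- Backward projection: a run of the product reaching the last location of
`transWord w` projects to a run of `T` on the remaining suffix of `w`. -/
lemma prod_run_proj {A L C : Type} (T : TA A L C) (w : List (A × ℝ≥0)) :
    ∀ {p : Fin (w.length + 1) × L} {u : Unit ⊕ C → ℝ≥0} {t : ℝ≥0}
      {tw : List (A × ℝ≥0)} {pf : Fin (w.length + 1) × L} {vf : Unit ⊕ C → ℝ≥0} {tf : ℝ≥0},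
      ((transWord w).prod T).Run p u t tw pf vf tf →
      pf.1 = Fin.last w.length →
      u (Sum.inl ()) = t →
      tw = w.drop p.1.val ∧
        T.Run p.2 (fun c => u (Sum.inr c)) t tw pf.2 (fun c => vf (Sum.inr c)) tf := by
  intro p u t₀ tw₀ pf vf₀ tf₀ h
  induction h with
  | nil l v t =>
    intro hlast hinl
    constructor
    · rw [hlast]; simp [Fin.last]
    · exact TA.Run.nil _ _ _
  | @cons l v t l' lf vf tf rest d g R a htrans hinvs hg hinv' htail ih =>
    intro hlast hinl
    obtain ⟨g₁, R₁, g₂, R₂, h1, h2, hgiff, hR⟩ := htrans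
    obtain ⟨i, hl1, hl'1, ha, hR₁, hg₁⟩ := h1
    subst hR₁
    subst hR
    have hgs := (hgiff _).1 hg
    have htd : t + d = (w.get i).2 := by
      have := (hg₁ _).1 hgs.1
      simpa [shift, hinl] using this
    have hinl' : resetv (shift v d) (Sum.inl '' (∅ : Set Unit) ∪ Sum.inr '' R₂)
        (Sum.inl ()) = t + d := by
      rw [resetv_prod_inl, hinl]
    obtain ⟨hrest, hrun⟩ := ih hlast hinl'
    have hlt : i.val < w.length := i.isLt
    constructor
    · rw [hl1]
      show _ = w.drop i.val
      rw [List.drop_eq_getElem_cons hlt]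
      congr 1
      · rw [ha, htd]; simp [List.get_eq_getElem]
      · rw [hrest, hl'1]; rfl
    · refine TA.Run.cons d g₂ R₂ a h2 (fun d' hd' => (hinvs d' hd').2) hgs.2 ?_ ?_
      · have := hinv'.2
        rwa [resetv_prod_inr] at this
      · rw [← resetv_prod_inr]
        exact hrun

/-- Forward embedding: a run of `T` on a suffix of `w` lifts to a run of the
product from the corresponding location of `transWord w`. -/
lemma run_to_prod {A L C : Type} (T : TA A L C) (w : List (A × ℝ≥0)) :
    ∀ {l : L} {v : C → ℝ≥0} {t : ℝ≥0} {tw : List (A × ℝ≥0)} {lf : L} {vf : C → ℝ≥0} {tf : ℝ≥0},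
      T.Run l v t tw lf vf tf →
      ∀ (k : Fin (w.length + 1)) (u : Unit ⊕ C → ℝ≥0),
        tw = w.drop k.val → u (Sum.inl ()) = t → (fun c => u (Sum.inr c)) = v →
        ∃ vf', ((transWord w).prod T).Run (k, l) u t tw (Fin.last w.length, lf) vf' tf := by
  intro l₀ v₀ t₀ tw₀ lf₀ vf₀ tf₀ h
  induction h with
  | nil l v t =>
    intro k u htw hinl hv
    have hk : k = Fin.last w.length := by
      have hle : w.length ≤ k.val := by
        rw [← List.drop_eq_nil_iff]
        exact htw.symm
      exact Fin.ext (le_antisymm (Nat.lt_succ_iff.mp k.isLt) hle)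
    subst hk
    exact ⟨u, TA.Run.nil _ _ _⟩
  | @cons l v t l' lf vf tf rest d gT RT a hT hinvs hgT hinv' htail ih =>
    intro k u htw hinl hv
    subst hv
    have hlt : k.val < w.length := by
      by_contra hge
      rw [List.drop_eq_nil_iff.mpr (not_lt.mp hge)] at htw
      exact List.cons_ne_nil _ _ htw
    set i : Fin w.length := ⟨k.val, hlt⟩ with hi
    have hdrop : w.drop k.val = w[k.val] :: w.drop (k.val + 1) :=
      List.drop_eq_getElem_cons hlt
    rw [hdrop] at htw
    have hhead : (a, t + d) = w[k.val] := (List.cons.injEq _ _ _ _ ▸ htw).1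
    have hrest : rest = w.drop (k.val + 1) := (List.cons.injEq _ _ _ _ ▸ htw).2
    have hget : w.get i = (a, t + d) := hhead.symm
    -- new valuation
    set RP : Set (Unit ⊕ C) := Sum.inl '' (∅ : Set Unit) ∪ Sum.inr '' RT with hRP
    have hinl' : resetv (shift u d) RP (Sum.inl ()) = t + d := by
      rw [hRP, resetv_prod_inl, hinl]
    have hvr : (fun c => resetv (shift u d) RP (Sum.inr c)) =
        resetv (shift (fun c => u (Sum.inr c)) d) RT := by
      rw [hRP]; exact resetv_prod_inr u d RT
    obtain ⟨vf', hrun⟩ := ih i.succ (resetv (shift u d) RP) (by rw [hrest]; rfl) hinl' hvr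
    refine ⟨vf', ?_⟩
    refine TA.Run.cons d
      (fun x => x (Sum.inl ()) = (w.get i).2 ∧ gT (fun c => x (Sum.inr c))) RP a
      ⟨fun x => x () = (w.get i).2, ∅, gT, RT,
        ⟨i, Fin.ext rfl, rfl, by rw [hget], rfl, fun x => Iff.rfl⟩,
        hT, fun x => Iff.rfl, hRP⟩
      (fun d' hd' => ⟨trivial, hinvs d' hd'⟩)
      ⟨by show u (Sum.inl ()) + d = (w.get i).2; rw [hinl, hget], hgT⟩
      ⟨trivial, by rw [hvr]; exact hinv'⟩
      hrun

/-- A finite timed word `w` is a timed word of the TA `T` iff the final location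
of `TransWord(w)` is reachable in the synchronized product `TransWord(w) ∥_Σ T`
(synchronizing on the whole alphabet, with no silent transitions). -/
theorem replayTW_correct {A L C : Type} (T : TA A L C) (w : List (A × ℝ≥0)) :
    (∃ lf vf tf, T.Run T.init (fun _ => 0) 0 w lf vf tf) ↔
    (∃ (tw : List (A × ℝ≥0)) (l₂ : L) (vf : Unit ⊕ C → ℝ≥0) (tf : ℝ≥0),
      ((transWord w).prod T).Run ((transWord w).prod T).init (fun _ => 0) 0 tw
        (Fin.last w.length, l₂) vf tf) := by
  constructor
  · rintro ⟨lf, vf, tf, h⟩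
    obtain ⟨vf', hrun⟩ := run_to_prod T w h 0 (fun _ => 0) (by simp) rfl rfl
    exact ⟨w, lf, vf', tf, hrun⟩
  · rintro ⟨tw, l₂, vf, tf, h⟩
    obtain ⟨htw, hrun⟩ := prod_run_proj T w (p := (0, T.init)) h rfl rfl
    simp only [List.drop_zero] at htw
    subst htw
    exact ⟨l₂, _, tf, hrun⟩
end
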